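/- arXiv:2203.08882 — 7 statements merged into one kernel-verified Lean document; each statement's English description precedes it below -/
import Mathlib

section
/- For two Hermitian matrices H₀ and H₁ = H₀ + V on a finite-dimensional complex Hilbert space and any β ≥ 0, the free-energy difference ΔA(β) := -(1/β)·ln(tr(exp(-β H₁))/tr(exp(-β H₀))) satisfies |ΔA(β)| ≤ ‖V‖, where ‖V‖ is the operator norm of V. Equivalently, e^{-β‖V‖} ≤ tr(exp(-β H₁))/tr(exp(-β H₀)) ≤ e^{β‖V‖}. -/
/-!
Peierls–Bogoliubov argument. Let `(bᵢ, μᵢ)` be an orthonormal eigenbasis of `H₁`. Expanding a unit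
vector `v` in an eigenbasis of `H₀`, Jensen's inequality for `exp` gives
`⟪v, e^{-βH₀} v⟫ ≥ e^{-β⟪v, H₀ v⟫}`. For `v = bᵢ` we have `⟪bᵢ, H₀ bᵢ⟫ = μᵢ - ⟪bᵢ, V bᵢ⟫`, so
`⟪bᵢ, e^{-βH₀} bᵢ⟫ ≥ e^{-β‖V‖} e^{-βμᵢ}`; summing over `i` gives `Z₀ ≥ e^{-β‖V‖} Z₁`. Exchanging the
roles of `H₀` and `H₁` gives `Z₁ ≥ e^{-β‖V‖} Z₀`, and the bound on `ΔA` is the logarithm of these.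
-/

open scoped BigOperators

/-- Partition function `Z(β) = tr (exp (-β H))` (real part; the trace of the
exponential of a Hermitian operator is real). -/
noncomputable def partitionFun {N : ℕ}
    (β : ℝ) (H : EuclideanSpace ℂ (Fin N) →L[ℂ] EuclideanSpace ℂ (Fin N)) : ℝ :=
  (LinearMap.trace ℂ (EuclideanSpace ℂ (Fin N))
    (NormedSpace.exp (((-β : ℝ) : ℂ) • H)).toLinearMap).re

open scoped InnerProductSpace

theorem ContinuousLinearMap.exp_apply_of_apply_eq_smul {E : Type*} [NormedAddCommGroup E]
    [NormedSpace ℂ E] [CompleteSpace E] {A : E →L[ℂ] E} {c : ℂ} {v : E} (hv : A v = c • v) :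
    NormedSpace.exp A v = Complex.exp c • v := by
  have hpow (n : ℕ) : (A ^ n) v = c ^ n • v := by
    induction n with
    | zero => simp
    | succ n ih => rw [pow_succ, mul_apply_eq_comp, hv, map_smul, ih, smul_smul, pow_succ']
  have hA := (NormedSpace.exp_series_hasSum_exp' (𝕂 := ℂ) A).mapL (apply ℂ E v)
  have hc := (NormedSpace.exp_series_hasSum_exp' (𝕂 := ℂ) c).smul_const v
  simp only [apply_apply, smul_apply, hpow, smul_assoc] at hA hc
  rw [Complex.exp_eq_exp_ℂ]
  exact hA.unique hc

theorem ContinuousLinearMap.abs_re_inner_apply_self_le_opNorm {E : Type*} [NormedAddCommGroup E]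
    [InnerProductSpace ℂ E] (T : E →L[ℂ] E) {v : E} (hv : ‖v‖ = 1) :
    |(⟪v, T v⟫_ℂ).re| ≤ ‖T‖ :=
  calc |(⟪v, T v⟫_ℂ).re| ≤ ‖⟪v, T v⟫_ℂ‖ := Complex.abs_re_le_norm _
    _ ≤ ‖v‖ * ‖T v‖ := norm_inner_le_norm _ _
    _ ≤ ‖v‖ * (‖T‖ * ‖v‖) := by gcongr; exact T.le_opNorm v
    _ = ‖T‖ := by rw [hv, one_mul, mul_one]

section Diagonal

variable {ι E : Type*} [Fintype ι] [NormedAddCommGroup E] [InnerProductSpace ℂ E]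

theorem OrthonormalBasis.re_inner_apply_self_eq_sum (b : OrthonormalBasis ι ℂ E)
    {T : E →L[ℂ] E} {c : ι → ℝ} (hT : ∀ i, T (b i) = (c i : ℂ) • b i) (v : E) :
    (⟪v, T v⟫_ℂ).re = ∑ i, ‖⟪b i, v⟫_ℂ‖ ^ 2 * c i := by
  have hTv : T v = ∑ i, (⟪b i, v⟫_ℂ * c i) • b i := by
    conv_lhs => rw [← b.sum_repr' v]
    simp only [map_sum, map_smul, hT, smul_smul]
  rw [hTv, inner_sum, Complex.re_sum]
  refine Finset.sum_congr rfl fun i _ => ?_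
  rw [inner_smul_right, ← inner_conj_symm v (b i), mul_comm, ← mul_assoc, Complex.conj_mul',
    ← Complex.ofReal_pow, ← Complex.ofReal_mul, Complex.ofReal_re]

theorem exp_re_inner_le_re_inner_exp [FiniteDimensional ℂ E] {H : E →L[ℂ] E}
    (hH : (H : E →ₗ[ℂ] E).IsSymmetric) (r : ℝ) {v : E} (hv : ‖v‖ = 1) :
    Real.exp (r * (⟪v, H v⟫_ℂ).re) ≤ (⟪v, NormedSpace.exp ((r : ℂ) • H) v⟫_ℂ).re := by
  set b := hH.eigenvectorBasis rfl
  set μ := hH.eigenvalues rfl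
  have hb (i) : H (b i) = (μ i : ℂ) • b i := hH.apply_eigenvectorBasis rfl i
  have hexp (i) : NormedSpace.exp ((r : ℂ) • H) (b i) = (Real.exp (r * μ i) : ℂ) • b i := by
    have hrH : ((r : ℂ) • H) (b i) = ((r * μ i : ℝ) : ℂ) • b i := by
      rw [smul_apply, hb, smul_smul, Complex.ofReal_mul]
    rw [ContinuousLinearMap.exp_apply_of_apply_eq_smul hrH, Complex.ofReal_exp]
  have hw : ∑ i, ‖⟪b i, v⟫_ℂ‖ ^ 2 = 1 := by rw [b.sum_sq_norm_inner_right, hv, one_pow]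
  have jensen := convexOn_exp.map_sum_le (t := Finset.univ) (p := fun i => r * μ i)
    (fun i _ => sq_nonneg ‖⟪b i, v⟫_ℂ‖) hw (fun i _ => Set.mem_univ _)
  simp only [smul_eq_mul, mul_left_comm _ r] at jensen
  rwa [b.re_inner_apply_self_eq_sum hb, b.re_inner_apply_self_eq_sum hexp, Finset.mul_sum]

end Diagonal

section PartitionFunction

variable {N : ℕ}

local notation "𝓔" => EuclideanSpace ℂ (Fin N)

theorem partitionFun_eq_sum_re_inner {ι : Type*} [Fintype ι] (β : ℝ) (H : 𝓔 →L[ℂ] 𝓔)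
    (b : OrthonormalBasis ι ℂ 𝓔) :
    partitionFun β H = ∑ i, (⟪b i, NormedSpace.exp (((-β : ℝ) : ℂ) • H) (b i)⟫_ℂ).re := by
  rw [partitionFun, LinearMap.trace_eq_sum_inner _ b, Complex.re_sum]
  rfl

theorem partitionFun_eq_sum_exp {ι : Type*} [Fintype ι] (β : ℝ) {H : 𝓔 →L[ℂ] 𝓔}
    (b : OrthonormalBasis ι ℂ 𝓔) {μ : ι → ℝ} (hb : ∀ i, H (b i) = (μ i : ℂ) • b i) :
    partitionFun β H = ∑ i, Real.exp (-β * μ i) := by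
  rw [partitionFun_eq_sum_re_inner β H b]
  refine Finset.sum_congr rfl fun i _ => ?_
  have hβH : (((-β : ℝ) : ℂ) • H) (b i) = ((-β * μ i : ℝ) : ℂ) • b i := by
    rw [smul_apply, hb, smul_smul, Complex.ofReal_mul]
  rw [ContinuousLinearMap.exp_apply_of_apply_eq_smul hβH, inner_smul_right, b.inner_eq_one,
    mul_one, ← Complex.ofReal_exp, Complex.ofReal_re]

theorem partitionFun_pos (hN : 0 < N) (β : ℝ) {H : 𝓔 →L[ℂ] 𝓔} (hH : IsSelfAdjoint H) :
    0 < partitionFun β H := by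
  have : Nonempty (Fin N) := ⟨⟨0, hN⟩⟩
  rw [partitionFun_eq_sum_exp β _
    (hH.isSymmetric.apply_eigenvectorBasis finrank_euclideanSpace_fin)]
  exact Finset.sum_pos (fun i _ => Real.exp_pos _) Finset.univ_nonempty

theorem partitionFun_le_exp_mul_partitionFun (β : ℝ) {A B : 𝓔 →L[ℂ] 𝓔}
    (hA : IsSelfAdjoint A) (hB : IsSelfAdjoint B) :
    partitionFun β B ≤ Real.exp (|β| * ‖B - A‖) * partitionFun β A := by
  set b := hB.isSymmetric.eigenvectorBasis rfl
  set μ := hB.isSymmetric.eigenvalues rfl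
  have hb (i) : B (b i) = (μ i : ℂ) • b i := hB.isSymmetric.apply_eigenvectorBasis rfl i
  rw [partitionFun_eq_sum_exp β b hb, partitionFun_eq_sum_re_inner β A b, Finset.mul_sum]
  refine Finset.sum_le_sum fun i _ => ?_
  have hμ : μ i = (⟪b i, A (b i)⟫_ℂ).re + (⟪b i, (B - A) (b i)⟫_ℂ).re := by
    rw [← Complex.add_re, ← inner_add_right, sub_apply, add_sub_cancel, hb,
      inner_smul_right, b.inner_eq_one, mul_one, Complex.ofReal_re]
  have hperturb : -β * (⟪b i, (B - A) (b i)⟫_ℂ).re ≤ |β| * ‖B - A‖ :=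
    calc _ ≤ |-β * (⟪b i, (B - A) (b i)⟫_ℂ).re| := le_abs_self _
      _ = |β| * |(⟪b i, (B - A) (b i)⟫_ℂ).re| := by rw [abs_mul, abs_neg]
      _ ≤ |β| * ‖B - A‖ := by
        gcongr; exact (B - A).abs_re_inner_apply_self_le_opNorm (b.orthonormal.1 i)
  calc Real.exp (-β * μ i)
      ≤ Real.exp (|β| * ‖B - A‖) * Real.exp (-β * (⟪b i, A (b i)⟫_ℂ).re) := by
        rw [← Real.exp_add, Real.exp_le_exp, hμ]
        linarith
    _ ≤ _ := by
        gcongr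
        exact exp_re_inner_le_re_inner_exp hA.isSymmetric (-β) (b.orthonormal.1 i)

end PartitionFunction

/-- **Free-energy difference bound.**  For Hermitian `H₀` and `H₁ = H₀ + V` and `β ≥ 0`,
`e^{-β‖V‖} ≤ Z₁/Z₀ ≤ e^{β‖V‖}`, and for `β > 0` the free-energy difference
`ΔA = -(1/β) log (Z₁/Z₀)` satisfies `|ΔA| ≤ ‖V‖`. -/
theorem free_energy_difference_le_norm {N : ℕ} (hN : 0 < N)
    (H₀ V : EuclideanSpace ℂ (Fin N) →L[ℂ] EuclideanSpace ℂ (Fin N))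
    (hH₀ : IsSelfAdjoint H₀) (hV : IsSelfAdjoint V)
    (β : ℝ) (hβ : 0 ≤ β) :
    (Real.exp (-(β * ‖V‖)) ≤ partitionFun β (H₀ + V) / partitionFun β H₀ ∧
      partitionFun β (H₀ + V) / partitionFun β H₀ ≤ Real.exp (β * ‖V‖)) ∧
    (0 < β →
      |-(1 / β) * Real.log (partitionFun β (H₀ + V) / partitionFun β H₀)| ≤ ‖V‖) := by
  have hH₁ : IsSelfAdjoint (H₀ + V) :=
    IsSelfAdjoint.add (R := EuclideanSpace ℂ (Fin N) →L[ℂ] EuclideanSpace ℂ (Fin N)) hH₀ hV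
  have hZ₀ := partitionFun_pos hN β hH₀
  have hup := partitionFun_le_exp_mul_partitionFun β hH₀ hH₁
  have hdown := partitionFun_le_exp_mul_partitionFun β hH₁ hH₀
  rw [add_sub_cancel_left, abs_of_nonneg hβ] at hup
  rw [sub_add_cancel_left, norm_neg, abs_of_nonneg hβ] at hdown
  have hlow : Real.exp (-(β * ‖V‖)) ≤ partitionFun β (H₀ + V) / partitionFun β H₀ := by
    rwa [le_div_iff₀ hZ₀, Real.exp_neg, inv_mul_le_iff₀ (Real.exp_pos _)]
  have hhigh : partitionFun β (H₀ + V) / partitionFun β H₀ ≤ Real.exp (β * ‖V‖) :=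
    (div_le_iff₀ hZ₀).2 hup
  refine ⟨⟨hlow, hhigh⟩, fun hβ_pos => ?_⟩
  have hratio := div_pos (partitionFun_pos hN β hH₁) hZ₀
  have hlog : |Real.log (partitionFun β (H₀ + V) / partitionFun β H₀)| ≤ β * ‖V‖ :=
    abs_le.2 ⟨(Real.le_log_iff_exp_le hratio).2 hlow, (Real.log_le_iff_le_exp hratio).2 hhigh⟩
  rwa [abs_mul, abs_neg, abs_of_pos (one_div_pos.2 hβ_pos), one_div_mul_eq_div,
    div_le_iff₀ hβ_pos, mul_comm]
end

section
/- Jarzynski equality (two-time measurement, finite dimension): Let H₀ and H₁ be Hermitian matrices on ℂ^N with orthonormal eigenbases {φ₀ₘ}, {φ₁ₙ} and eigenvalues ε₀ₘ, ε₁ₙ, let 𝒰 be a unitary, and β ≥ 0. Then ∑ₘ∑ₙ (e^{-β ε₀ₘ}/Z₀) · |⟨φ₁ₙ|𝒰|φ₀ₘ⟩|² · e^{-β(ε₁ₙ - ε₀ₘ)} = Z₁/Z₀, where Zᵢ = tr(exp(-β Hᵢ)). -/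
open scoped BigOperators

/-!
The measurement of `H₀`, then `𝒰`, then the measurement of `H₁` gives the transition `m → n`
probability `|⟨φ₁ₙ|𝒰|φ₀ₘ⟩|²`. The work factor `e^{-β(ε₁ₙ - ε₀ₘ)}` cancels the initial Boltzmann
weight `e^{-β ε₀ₘ}` against the final one `e^{-β ε₁ₙ}`, and the remaining sum over `m` of the
transition probabilities into a fixed `n` is `‖𝒰⁻¹ φ₁ₙ‖² = 1` by Parseval in the basis `φ₀`.
-/

open Finset

theorem OrthonormalBasis.sum_sq_norm_inner_map_right {𝕜 E F ι : Type*} [RCLike 𝕜]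
    [NormedAddCommGroup E] [InnerProductSpace 𝕜 E] [NormedAddCommGroup F] [InnerProductSpace 𝕜 F]
    [Fintype ι] (b : OrthonormalBasis ι 𝕜 E) (U : E ≃ₗᵢ[𝕜] F) (v : F) :
    ∑ m, ‖(inner 𝕜 v (U (b m)) : 𝕜)‖ ^ 2 = ‖v‖ ^ 2 := by
  simpa only [OrthonormalBasis.map_apply] using (b.map U).sum_sq_norm_inner_left v

theorem sum_sum_boltzmann_mul_transition_mul_exp_work {ι κ : Type*} [Fintype ι] [Fintype κ]
    (p : κ → ι → ℝ) (hp : ∀ n, ∑ m, p n m = 1) (e0 : ι → ℝ) (e1 : κ → ℝ) (β Z : ℝ) :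
    ∑ m, ∑ n, Real.exp (-β * e0 m) / Z * p n m * Real.exp (-β * (e1 n - e0 m))
      = (∑ n, Real.exp (-β * e1 n)) / Z := by
  have cancel : ∀ m n, Real.exp (-β * e0 m) / Z * p n m * Real.exp (-β * (e1 n - e0 m))
      = Real.exp (-β * e1 n) / Z * p n m := by
    intro m n
    rw [mul_right_comm, div_mul_eq_mul_div, ← Real.exp_add]
    ring_nf
  simp only [cancel]
  rw [sum_comm, sum_div]
  simp only [← mul_sum, hp, mul_one]

theorem jarzynski_equality_general {N : ℕ}
    (φ₀ φ₁ : OrthonormalBasis (Fin N) ℂ (EuclideanSpace ℂ (Fin N)))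
    (e0 e1 : Fin N → ℝ)
    (𝒰 : EuclideanSpace ℂ (Fin N) ≃ₗᵢ[ℂ] EuclideanSpace ℂ (Fin N))
    (β : ℝ)
    (Z₀ Z₁ : ℝ)
    (hZ₁ : Z₁ = ∑ n, Real.exp (-β * e1 n)) :
    ∑ m, ∑ n,
        Real.exp (-β * e0 m) / Z₀ * ‖(inner ℂ (φ₁ n) (𝒰 (φ₀ m)) : ℂ)‖ ^ 2 *
          Real.exp (-β * (e1 n - e0 m))
      = Z₁ / Z₀ := by
  have transition_sum_eq_one : ∀ n, ∑ m, ‖(inner ℂ (φ₁ n) (𝒰 (φ₀ m)) : ℂ)‖ ^ 2 = 1 := fun n ↦ by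
    rw [φ₀.sum_sq_norm_inner_map_right 𝒰, φ₁.orthonormal.1 n, one_pow]
  rw [hZ₁]
  exact sum_sum_boltzmann_mul_transition_mul_exp_work _ transition_sum_eq_one e0 e1 β Z₀

/-- **Jarzynski equality** (two-time measurement scheme, finite dimension).
Given Hermitian `H₀, H₁` on `ℂ^N` with orthonormal eigenbases `φ₀, φ₁` and eigenvalues
`e0, e1`, a unitary `𝒰`, and `β ≥ 0`:
`∑ₘ ∑ₙ (e^{-β e0ₘ}/Z₀) |⟨φ₁ₙ|𝒰|φ₀ₘ⟩|² e^{-β (e1ₙ - e0ₘ)} = Z₁/Z₀`. -/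
theorem jarzynski_equality {N : ℕ}
    (H₀ H₁ : EuclideanSpace ℂ (Fin N) →L[ℂ] EuclideanSpace ℂ (Fin N))
    (hH₀ : IsSelfAdjoint H₀) (hH₁ : IsSelfAdjoint H₁)
    (φ₀ φ₁ : OrthonormalBasis (Fin N) ℂ (EuclideanSpace ℂ (Fin N)))
    (e0 e1 : Fin N → ℝ)
    (h0 : ∀ m, H₀ (φ₀ m) = (e0 m : ℂ) • φ₀ m)
    (h1 : ∀ n, H₁ (φ₁ n) = (e1 n : ℂ) • φ₁ n)
    (𝒰 : EuclideanSpace ℂ (Fin N) ≃ₗᵢ[ℂ] EuclideanSpace ℂ (Fin N))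
    (β : ℝ) (hβ : 0 ≤ β)
    (Z₀ Z₁ : ℝ)
    (hZ₀ : Z₀ = ∑ m, Real.exp (-β * e0 m))
    (hZ₁ : Z₁ = ∑ n, Real.exp (-β * e1 n)) :
    ∑ m, ∑ n,
        Real.exp (-β * e0 m) / Z₀ * ‖(inner ℂ (φ₁ n) (𝒰 (φ₀ m)) : ℂ)‖ ^ 2 *
          Real.exp (-β * (e1 n - e0 m))
      = Z₁ / Z₀ :=
  jarzynski_equality_general φ₀ φ₁ e0 e1 𝒰 β Z₀ Z₁ hZ₁
end

section
/- Thermofield-double preparation identity: With notation as in the two-copy scheme, (1 ⊗ 𝒰*) e^{-βW/2} (𝒰 ⊗ 1) |Ψ₀⟩ = e^{-β ΔA/2} |Ψ₁⟩, where |Ψ₁⟩ = (1/√Z₁) ∑ₙ e^{-β ε₁ₙ/2} |φ₁ₙ⟩ ⊗ |φ₁ₙ*⟩. -/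
/-!
Expanding `𝒰 φ₀ₘ = ∑ₙ ⟨φ₁ₙ|𝒰|φ₀ₘ⟩ φ₁ₙ` writes `(𝒰 ⊗ 1)|Ψ₀⟩` in the eigenbasis `φ₁ₙ ⊗ φ₀ₘ*` of `W`,
on which `e^{-βW/2}` turns the weight `e^{-βε₀ₘ/2}` into `e^{-βε₁ₙ/2}`. What is then left in the
second factor is `∑ₘ ⟨φ₁ₙ|𝒰|φ₀ₘ⟩ φ₀ₘ* = (𝒰†φ₁ₙ)*` by completeness of `φ₀`, and `𝒰*` sends it
to `φ₁ₙ*`. Finally `1/√Z₀ = √(Z₁/Z₀) · 1/√Z₁` because `Z₁ > 0`.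
-/

/-- The elementary tensor `u ⊗ v`, realized on the doubled Euclidean space. -/
noncomputable def tensorVec {N : ℕ} (u v : EuclideanSpace ℂ (Fin N)) :
    EuclideanSpace ℂ (Fin N × Fin N) :=
  (WithLp.equiv 2 _).symm fun p => u p.1 * v p.2

/-- Entrywise complex conjugation of a vector (in the computational basis). -/
noncomputable def starVec {N : ℕ} (u : EuclideanSpace ℂ (Fin N)) :
    EuclideanSpace ℂ (Fin N) :=
  (WithLp.equiv 2 _).symm fun i => star (u i)

section TensorVec

variable {N : ℕ}

@[simp]
lemma tensorVec_apply (u v : EuclideanSpace ℂ (Fin N)) (p : Fin N × Fin N) :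
    tensorVec u v p = u p.1 * v p.2 := rfl

@[simp]
lemma starVec_apply (u : EuclideanSpace ℂ (Fin N)) (i : Fin N) :
    starVec u i = star (u i) := rfl

lemma starVec_starVec (u : EuclideanSpace ℂ (Fin N)) : starVec (starVec u) = u := by
  ext i; simp

lemma starVec_smul (a : ℂ) (u : EuclideanSpace ℂ (Fin N)) :
    starVec (a • u) = star a • starVec u := by
  ext i; simp

lemma starVec_sum {ι : Type*} (s : Finset ι) (f : ι → EuclideanSpace ℂ (Fin N)) :
    starVec (∑ i ∈ s, f i) = ∑ i ∈ s, starVec (f i) := by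
  ext j; simp

lemma tensorVec_smul_left (a : ℂ) (u v : EuclideanSpace ℂ (Fin N)) :
    tensorVec (a • u) v = a • tensorVec u v := by
  ext p; simp [mul_assoc]

lemma tensorVec_smul_right (a : ℂ) (u v : EuclideanSpace ℂ (Fin N)) :
    tensorVec u (a • v) = a • tensorVec u v := by
  ext p; simp [mul_left_comm]

lemma tensorVec_sum_left {ι : Type*} (s : Finset ι) (f : ι → EuclideanSpace ℂ (Fin N))
    (v : EuclideanSpace ℂ (Fin N)) :
    tensorVec (∑ i ∈ s, f i) v = ∑ i ∈ s, tensorVec (f i) v := by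
  ext p; simp [Finset.sum_mul]

lemma tensorVec_sum_right {ι : Type*} (s : Finset ι) (u : EuclideanSpace ℂ (Fin N))
    (f : ι → EuclideanSpace ℂ (Fin N)) :
    tensorVec u (∑ i ∈ s, f i) = ∑ i ∈ s, tensorVec u (f i) := by
  ext p; simp [Finset.mul_sum]

end TensorVec

namespace ContinuousLinearMap

lemma pow_apply_of_apply_eq_smul {R E : Type*} [CommSemiring R] [AddCommMonoid E]
    [TopologicalSpace E] [Module R E] {A : E →L[R] E} {v : E} {μ : R} (h : A v = μ • v)
    (n : ℕ) : (A ^ n) v = μ ^ n • v := by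
  induction n with
  | zero => simp
  | succ k ih => simp [pow_succ, ih, h, smul_smul, mul_comm]

variable {E : Type*} [NormedAddCommGroup E] [NormedSpace ℂ E] [CompleteSpace E]

lemma exp_apply_of_apply_eq_smul_s4 {A : E →L[ℂ] E} {v : E} {μ : ℂ} (h : A v = μ • v) :
    NormedSpace.exp A v = Complex.exp μ • v := by
  have hA := (NormedSpace.exp_series_hasSum_exp' (𝕂 := ℂ) A).mapL (apply ℂ E v)
  have hμ := (NormedSpace.exp_series_hasSum_exp' (𝕂 := ℂ) μ).smul_const v
  rw [← Complex.exp_eq_exp_ℂ] at hμ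
  refine hA.unique ?_
  simpa [pow_apply_of_apply_eq_smul h, smul_smul] using hμ

lemma exp_apply_sum_sum_of_apply_eq_smul {κ κ' : Type*} [Fintype κ] [Fintype κ']
    {A : E →L[ℂ] E} {v : κ → κ' → E} {μ : κ → κ' → ℂ} (h : ∀ i j, A (v i j) = μ i j • v i j)
    (x : κ → κ' → ℂ) :
    NormedSpace.exp A (∑ i, ∑ j, x i j • v i j)
      = ∑ i, ∑ j, (x i j * Complex.exp (μ i j)) • v i j := by
  have hexp : ∀ i j, NormedSpace.exp A (v i j) = Complex.exp (μ i j) • v i j :=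
    fun i j => exp_apply_of_apply_eq_smul_s4 (h i j)
  simp_rw [map_sum, map_smul, hexp, smul_smul]

end ContinuousLinearMap

section OrthonormalBasis

variable {N : ℕ} {ι : Type*} [Fintype ι]

lemma OrthonormalBasis.tensorVec_eq_sum_left (b : OrthonormalBasis ι ℂ (EuclideanSpace ℂ (Fin N)))
    (u v : EuclideanSpace ℂ (Fin N)) :
    tensorVec u v = ∑ i, inner ℂ (b i) u • tensorVec (b i) v := by
  conv_lhs => rw [← b.sum_repr' u]
  simp_rw [tensorVec_sum_left, tensorVec_smul_left]

lemma OrthonormalBasis.sum_inner_smul_starVec (b : OrthonormalBasis ι ℂ (EuclideanSpace ℂ (Fin N)))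
    (U : EuclideanSpace ℂ (Fin N) ≃ₗᵢ[ℂ] EuclideanSpace ℂ (Fin N)) (w : EuclideanSpace ℂ (Fin N)) :
    ∑ i, inner ℂ w (U (b i)) • starVec (b i) = starVec (U.symm w) := by
  conv_rhs => rw [← b.sum_repr' (U.symm w)]
  simp_rw [starVec_sum, starVec_smul, ← starRingEnd_apply, inner_conj_symm]
  congr! 2 with i
  rw [← U.inner_map_map (U.symm w), U.apply_symm_apply]

end OrthonormalBasis

section TwoCopy

variable {N : ℕ} {ι : Type*} [Fintype ι]
  (φ₀ φ₁ : OrthonormalBasis ι ℂ (EuclideanSpace ℂ (Fin N)))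
  (𝒰 : EuclideanSpace ℂ (Fin N) ≃ₗᵢ[ℂ] EuclideanSpace ℂ (Fin N))
  {V : EuclideanSpace ℂ (Fin N × Fin N) →L[ℂ] EuclideanSpace ℂ (Fin N × Fin N)}

lemma apply_sum_tensorVec_of_unitary_left (hV : ∀ u v, V (tensorVec u v) = tensorVec (𝒰 u) v)
    (x : ι → ℂ) :
    V (∑ m, x m • tensorVec (φ₀ m) (starVec (φ₀ m)))
      = ∑ m, ∑ n, (x m * inner ℂ (φ₁ n) (𝒰 (φ₀ m))) • tensorVec (φ₁ n) (starVec (φ₀ m)) := by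
  simp_rw [map_sum, map_smul, hV, φ₁.tensorVec_eq_sum_left (𝒰 _), Finset.smul_sum, smul_smul]

lemma apply_sum_tensorVec_of_conj_unitary_right
    (hV : ∀ u v, V (tensorVec u v) = tensorVec u (starVec (𝒰 (starVec v)))) (y : ι → ℂ) :
    V (∑ m, ∑ n, (y n * inner ℂ (φ₁ n) (𝒰 (φ₀ m))) • tensorVec (φ₁ n) (starVec (φ₀ m)))
      = ∑ n, y n • tensorVec (φ₁ n) (starVec (φ₁ n)) := by
  calc _ = V (∑ n, y n • tensorVec (φ₁ n) (∑ m, inner ℂ (φ₁ n) (𝒰 (φ₀ m)) • starVec (φ₀ m))) := by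
        simp_rw [tensorVec_sum_right, tensorVec_smul_right, Finset.smul_sum, smul_smul]
        rw [Finset.sum_comm]
    _ = _ := by
        simp_rw [φ₀.sum_inner_smul_starVec, map_sum, map_smul, hV, starVec_starVec,
          𝒰.apply_symm_apply]

end TwoCopy

lemma ofReal_exp_half_mul_exp_half_sub (β e e' : ℝ) :
    ((Real.exp (-β * e / 2) : ℝ) : ℂ) * Complex.exp (((-(β / 2) : ℝ) : ℂ) * ((e' - e : ℝ) : ℂ))
      = ((Real.exp (-β * e' / 2) : ℝ) : ℂ) := by
  push_cast
  rw [← Complex.exp_add]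
  ring_nf

lemma Real.inv_sqrt_eq_sqrt_div_mul_inv_sqrt {y : ℝ} (hy : 0 < y) (x : ℝ) :
    (√x)⁻¹ = √(y / x) * (√y)⁻¹ := by
  rw [Real.sqrt_div hy.le, div_eq_mul_inv, mul_right_comm,
    mul_inv_cancel₀ (Real.sqrt_pos.mpr hy).ne', one_mul]

theorem thermofield_double_preparation_general {N : ℕ} (hN : 0 < N)
    (φ₀ φ₁ : OrthonormalBasis (Fin N) ℂ (EuclideanSpace ℂ (Fin N)))
    (e0 e1 : Fin N → ℝ)
    (𝒰 : EuclideanSpace ℂ (Fin N) ≃ₗᵢ[ℂ] EuclideanSpace ℂ (Fin N))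
    (β : ℝ)
    (Z₀ Z₁ : ℝ)
    (hZ₁ : Z₁ = ∑ n, Real.exp (-β * e1 n))
    (W UI IUstar :
      EuclideanSpace ℂ (Fin N × Fin N) →L[ℂ] EuclideanSpace ℂ (Fin N × Fin N))
    (hW : ∀ m n, W (tensorVec (φ₁ n) (starVec (φ₀ m)))
        = ((e1 n - e0 m : ℝ) : ℂ) • tensorVec (φ₁ n) (starVec (φ₀ m)))
    (hUI : ∀ u v, UI (tensorVec u v) = tensorVec (𝒰 u) v)
    (hIUstar : ∀ u v, IUstar (tensorVec u v) = tensorVec u (starVec (𝒰 (starVec v))))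
    (Ψ₀ Ψ₁ : EuclideanSpace ℂ (Fin N × Fin N))
    (hΨ₀ : Ψ₀ = ((Real.sqrt Z₀ : ℝ) : ℂ)⁻¹ •
        ∑ m, ((Real.exp (-β * e0 m / 2) : ℝ) : ℂ) • tensorVec (φ₀ m) (starVec (φ₀ m)))
    (hΨ₁ : Ψ₁ = ((Real.sqrt Z₁ : ℝ) : ℂ)⁻¹ •
        ∑ n, ((Real.exp (-β * e1 n / 2) : ℝ) : ℂ) • tensorVec (φ₁ n) (starVec (φ₁ n))) :
    IUstar ((NormedSpace.exp (((-(β / 2) : ℝ) : ℂ) • W)) (UI Ψ₀))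
      = ((Real.sqrt (Z₁ / Z₀) : ℝ) : ℂ) • Ψ₁ := by
  have hZ₁_pos : 0 < Z₁ := hZ₁ ▸ Finset.sum_pos (fun n _ => Real.exp_pos _)
    (Finset.univ_nonempty_iff.mpr (Fin.pos_iff_nonempty.mp hN))
  have hW_smul : ∀ m n, (((-(β / 2) : ℝ) : ℂ) • W) (tensorVec (φ₁ n) (starVec (φ₀ m)))
      = (((-(β / 2) : ℝ) : ℂ) * ((e1 n - e0 m : ℝ) : ℂ)) • tensorVec (φ₁ n) (starVec (φ₀ m)) :=
    fun m n => by rw [smul_apply, hW, smul_smul]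
  rw [hΨ₀, map_smul, map_smul, apply_sum_tensorVec_of_unitary_left φ₀ φ₁ 𝒰 hUI,
    ContinuousLinearMap.exp_apply_sum_sum_of_apply_eq_smul hW_smul]
  simp_rw [mul_right_comm _ (inner ℂ _ _), ofReal_exp_half_mul_exp_half_sub]
  rw [map_smul, apply_sum_tensorVec_of_conj_unitary_right φ₀ φ₁ 𝒰 hIUstar, hΨ₁, smul_smul]
  congr 1
  exact_mod_cast Real.inv_sqrt_eq_sqrt_div_mul_inv_sqrt hZ₁_pos Z₀

/-- **Thermofield-double preparation identity.**
`(1 ⊗ 𝒰*) e^{-βW/2} (𝒰 ⊗ 1) |Ψ₀⟩ = e^{-β ΔA/2} |Ψ₁⟩ = √(Z₁/Z₀) |Ψ₁⟩`, where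
`|Ψᵢ⟩` are the thermofield double states of `Hᵢ`, `W = H₁ ⊗ 1 − 1 ⊗ H₀*`, and
`𝒰*` is the entrywise complex conjugate of the unitary `𝒰`
(so `𝒰* v = star (𝒰 (star v))` entrywise). -/
theorem thermofield_double_preparation {N : ℕ} (hN : 0 < N)
    (H₀ H₁ : EuclideanSpace ℂ (Fin N) →L[ℂ] EuclideanSpace ℂ (Fin N))
    (hH₀ : IsSelfAdjoint H₀) (hH₁ : IsSelfAdjoint H₁)
    (φ₀ φ₁ : OrthonormalBasis (Fin N) ℂ (EuclideanSpace ℂ (Fin N)))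
    (e0 e1 : Fin N → ℝ)
    (h0 : ∀ m, H₀ (φ₀ m) = (e0 m : ℂ) • φ₀ m)
    (h1 : ∀ n, H₁ (φ₁ n) = (e1 n : ℂ) • φ₁ n)
    (𝒰 : EuclideanSpace ℂ (Fin N) ≃ₗᵢ[ℂ] EuclideanSpace ℂ (Fin N))
    (β : ℝ) (hβ : 0 ≤ β)
    (Z₀ Z₁ : ℝ)
    (hZ₀ : Z₀ = ∑ m, Real.exp (-β * e0 m))
    (hZ₁ : Z₁ = ∑ n, Real.exp (-β * e1 n))
    (W UI IUstar :
      EuclideanSpace ℂ (Fin N × Fin N) →L[ℂ] EuclideanSpace ℂ (Fin N × Fin N))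
    (hW : ∀ m n, W (tensorVec (φ₁ n) (starVec (φ₀ m)))
        = ((e1 n - e0 m : ℝ) : ℂ) • tensorVec (φ₁ n) (starVec (φ₀ m)))
    (hUI : ∀ u v, UI (tensorVec u v) = tensorVec (𝒰 u) v)
    (hIUstar : ∀ u v, IUstar (tensorVec u v) = tensorVec u (starVec (𝒰 (starVec v))))
    (Ψ₀ Ψ₁ : EuclideanSpace ℂ (Fin N × Fin N))
    (hΨ₀ : Ψ₀ = ((Real.sqrt Z₀ : ℝ) : ℂ)⁻¹ •
        ∑ m, ((Real.exp (-β * e0 m / 2) : ℝ) : ℂ) • tensorVec (φ₀ m) (starVec (φ₀ m)))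
    (hΨ₁ : Ψ₁ = ((Real.sqrt Z₁ : ℝ) : ℂ)⁻¹ •
        ∑ n, ((Real.exp (-β * e1 n / 2) : ℝ) : ℂ) • tensorVec (φ₁ n) (starVec (φ₁ n))) :
    IUstar ((NormedSpace.exp (((-(β / 2) : ℝ) : ℂ) • W)) (UI Ψ₀))
      = ((Real.sqrt (Z₁ / Z₀) : ℝ) : ℂ) • Ψ₁ :=
  thermofield_double_preparation_general hN φ₀ φ₁ e0 e1 𝒰 β Z₀ Z₁ hZ₁ W UI IUstar hW hUI hIUstar Ψ₀
    Ψ₁ hΨ₀ hΨ₁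
end

section
/- Work cutoff for general Hamiltonians: Let H₀, H₁ = H₀ + V be Hermitian on ℂ^N, 𝒰 unitary, ε > 0, β ≥ 0, and set V_𝒰 = H₁ − 𝒰 H₀ 𝒰†. Then for any wₗ ≤ −6‖V_𝒰‖/ε, the forward work distribution satisfies ∑_{w < wₗ} P(w) e^{-β(w − ΔA)} ≤ (ε/6)², where ΔA = -(1/β) ln(Z₁/Z₀) (equivalently ∑_{w<wₗ} P(w) e^{-βw} ≤ (ε/6)² Z₁/Z₀). -/
/-! Reweighting each transition by `e^{-βw}` turns the initial Gibbs weight `e^{-βε₀ₘ}` into the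
final one `e^{-βε₁ₙ}` (Crooks). The matrix elements of `V_𝒰` between the eigenbases are
`⟨φ₁ₙ|V_𝒰 𝒰|φ₀ₘ⟩ = (ε₁ₙ - ε₀ₘ) ⟨φ₁ₙ|𝒰|φ₀ₘ⟩`, so Bessel's inequality bounds the reweighted second
moment of the work by `‖V_𝒰‖² Z₁ / Z₀`, and a Markov-type bound at the cutoff `wₗ` finishes. -/

open scoped InnerProductSpace

namespace Finset

theorem sum_filter_lt_le_of_sum_sq_mul_le {ι : Type*} (s : Finset ι) {f g : ι → ℝ}
    (hg : ∀ p ∈ s, 0 ≤ g p) {wl K : ℝ} (hwl : wl ≤ 0) (hK : 0 ≤ K)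
    (hmom : ∑ p ∈ s, f p ^ 2 * g p ≤ wl ^ 2 * K) :
    ∑ p ∈ s.filter (fun p => f p < wl), g p ≤ K := by
  have htail : ∑ p ∈ s.filter (fun p => f p < wl), f p ^ 2 * g p ≤ wl ^ 2 * K :=
    (sum_le_sum_of_subset_of_nonneg (filter_subset _ _) fun p hp _ =>
      mul_nonneg (sq_nonneg _) (hg p hp)).trans hmom
  have hterm : ∀ p ∈ s.filter (fun p => f p < wl), 0 ≤ f p ^ 2 * g p := fun p hp =>
    mul_nonneg (sq_nonneg _) (hg p (mem_filter.1 hp).1)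
  rcases hwl.lt_or_eq with hneg | rfl
  · refine le_of_mul_le_mul_left ?_ (sq_pos_of_neg hneg)
    refine le_trans ?_ htail
    rw [mul_sum]
    refine sum_le_sum fun p hp => ?_
    obtain ⟨hps, hp⟩ := mem_filter.1 hp
    exact mul_le_mul_of_nonneg_right (by nlinarith) (hg p hps)
  · rw [zero_pow two_ne_zero, zero_mul] at htail
    have hzero := (sum_eq_zero_iff_of_nonneg hterm).1 (htail.antisymm (sum_nonneg hterm))
    rw [sum_eq_zero fun p hp => ?_]
    · exact hK
    exact (mul_eq_zero.1 (hzero p hp)).resolve_left (pow_ne_zero 2 (mem_filter.1 hp).2.ne)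

theorem sum_filter_image_sum_fiber_mul {ι α R : Type*} [Fintype ι] [DecidableEq α]
    [CommSemiring R] (f : ι → α) (w : ι → R) (h : α → R) (q : α → Prop) [DecidablePred q] :
    ∑ ω ∈ (univ.image f).filter q, (∑ p ∈ univ.filter (fun p => f p = ω), w p) * h ω
      = ∑ p ∈ univ.filter (fun p => q (f p)), w p * h (f p) := by
  calc _ = ∑ ω ∈ (univ.image f).filter q, ∑ p ∈ univ.filter (fun p => f p = ω), w p * h (f p) :=
        sum_congr rfl fun ω _ => by
          rw [sum_mul]
          exact sum_congr rfl fun p hp => by rw [(mem_filter.1 hp).2]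
    _ = _ := by
      rw [sum_fiberwise_eq_sum_filter]
      exact sum_congr (filter_congr fun p _ => by simp) fun _ _ => rfl

end Finset

section

variable {𝕜 E F : Type*} [RCLike 𝕜] [NormedAddCommGroup E] [InnerProductSpace 𝕜 E]
  [CompleteSpace E] [NormedAddCommGroup F] [InnerProductSpace 𝕜 F] [CompleteSpace F]

theorem IsSelfAdjoint.inner_apply_of_apply_eq_smul {A : E →L[𝕜] E} (hA : IsSelfAdjoint A)
    {x : E} {a : ℝ} (hx : A x = (a : 𝕜) • x) (z : E) : ⟪x, A z⟫_𝕜 = a * ⟪x, z⟫_𝕜 := by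
  rw [← ContinuousLinearMap.adjoint_inner_left, hA.adjoint_eq, hx, inner_smul_left,
    RCLike.conj_ofReal]

theorem Orthonormal.sum_norm_inner_apply_sq_le {ι : Type*} {v : ι → E} (hv : Orthonormal 𝕜 v)
    (s : Finset ι) (T : E →L[𝕜] F) (x : F) :
    ∑ i ∈ s, ‖⟪x, T (v i)⟫_𝕜‖ ^ 2 ≤ (‖T‖ * ‖x‖) ^ 2 := by
  calc ∑ i ∈ s, ‖⟪x, T (v i)⟫_𝕜‖ ^ 2 = ∑ i ∈ s, ‖⟪v i, ContinuousLinearMap.adjoint T x⟫_𝕜‖ ^ 2 := by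
        simp_rw [ContinuousLinearMap.adjoint_inner_right, norm_inner_symm]
    _ ≤ ‖ContinuousLinearMap.adjoint T x‖ ^ 2 := hv.sum_inner_products_le _
    _ ≤ (‖T‖ * ‖x‖) ^ 2 := by
      gcongr
      simpa using (ContinuousLinearMap.adjoint T).le_opNorm x

theorem IsSelfAdjoint.inner_apply_map_eq_sub_mul {A B T : E →L[𝕜] E} (hA : IsSelfAdjoint A)
    (U : E ≃ₗᵢ[𝕜] E) (hT : ∀ ξ, T ξ = A ξ - U (B (U.symm ξ))) {x y : E} {a b : ℝ}
    (hx : A x = (a : 𝕜) • x) (hy : B y = (b : 𝕜) • y) :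
    ⟪x, T (U y)⟫_𝕜 = ((a - b : ℝ) : 𝕜) * ⟪x, U y⟫_𝕜 := by
  rw [hT, U.symm_apply_apply, hy, map_smul, inner_sub_right, inner_smul_right,
    hA.inner_apply_of_apply_eq_smul hx, RCLike.ofReal_sub, sub_mul]

theorem IsSelfAdjoint.sum_sq_sub_mul_norm_inner_sq_mul_le {ι κ : Type*} [Fintype ι] [Fintype κ]
    {A B T : E →L[𝕜] E} (hA : IsSelfAdjoint A) (U : E ≃ₗᵢ[𝕜] E)
    (hT : ∀ ξ, T ξ = A ξ - U (B (U.symm ξ))) {φ₀ : ι → E} (hφ₀ : Orthonormal 𝕜 φ₀)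
    {φ₁ : κ → E} (hφ₁ : ∀ n, ‖φ₁ n‖ ≤ 1) {e0 : ι → ℝ} {e1 : κ → ℝ}
    (h0 : ∀ m, B (φ₀ m) = (e0 m : 𝕜) • φ₀ m) (h1 : ∀ n, A (φ₁ n) = (e1 n : 𝕜) • φ₁ n)
    {c : κ → ℝ} (hc : ∀ n, 0 ≤ c n) :
    ∑ p : ι × κ, (e1 p.2 - e0 p.1) ^ 2 * (‖⟪φ₁ p.2, U (φ₀ p.1)⟫_𝕜‖ ^ 2 * c p.2)
      ≤ ‖T‖ ^ 2 * ∑ n, c n := by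
  have hmatrix : ∀ m n, (e1 n - e0 m) ^ 2 * ‖⟪φ₁ n, U (φ₀ m)⟫_𝕜‖ ^ 2
      = ‖⟪φ₁ n, T (U (φ₀ m))⟫_𝕜‖ ^ 2 := fun m n => by
    rw [hA.inner_apply_map_eq_sub_mul U hT (h1 n) (h0 m), norm_mul, RCLike.norm_ofReal,
      mul_pow, sq_abs]
  have hbessel : ∀ n, ∑ m, ‖⟪φ₁ n, T (U (φ₀ m))⟫_𝕜‖ ^ 2 ≤ ‖T‖ ^ 2 :=
    fun n => ((hφ₀.comp_linearIsometryEquiv U).sum_norm_inner_apply_sq_le _ T (φ₁ n)).trans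
      (by gcongr; exact mul_le_of_le_one_right (norm_nonneg T) (hφ₁ n))
  calc _ = ∑ n, (∑ m, ‖⟪φ₁ n, T (U (φ₀ m))⟫_𝕜‖ ^ 2) * c n := by
        simp_rw [← mul_assoc, hmatrix, Finset.sum_mul]
        exact Fintype.sum_prod_type_right _
    _ ≤ ∑ n, ‖T‖ ^ 2 * c n := Finset.sum_le_sum fun n _ =>
        mul_le_mul_of_nonneg_right (hbessel n) (hc n)
    _ = ‖T‖ ^ 2 * ∑ n, c n := (Finset.mul_sum _ _ _).symm

end

theorem work_cutoff_general_hamiltonians_general {N : ℕ}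
    (H₀ H₁ V : EuclideanSpace ℂ (Fin N) →L[ℂ] EuclideanSpace ℂ (Fin N))
    (hH₀ : IsSelfAdjoint H₀) (hV : IsSelfAdjoint V) (hH₁ : H₁ = H₀ + V)
    (φ₀ φ₁ : OrthonormalBasis (Fin N) ℂ (EuclideanSpace ℂ (Fin N)))
    (e0 e1 : Fin N → ℝ)
    (h0 : ∀ m, H₀ (φ₀ m) = (e0 m : ℂ) • φ₀ m)
    (h1 : ∀ n, H₁ (φ₁ n) = (e1 n : ℂ) • φ₁ n)
    (𝒰 : EuclideanSpace ℂ (Fin N) ≃ₗᵢ[ℂ] EuclideanSpace ℂ (Fin N))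
    (β : ℝ) (ε : ℝ) (hε : 0 < ε)
    (Z₀ Z₁ : ℝ)
    (hZ₀ : Z₀ = ∑ m, Real.exp (-β * e0 m))
    (hZ₁ : Z₁ = ∑ n, Real.exp (-β * e1 n))
    (Vu : EuclideanSpace ℂ (Fin N) →L[ℂ] EuclideanSpace ℂ (Fin N))
    (hVu : ∀ ξ, Vu ξ = H₁ ξ - 𝒰 (H₀ (𝒰.symm ξ)))
    (P : ℝ → ℝ)
    (hP : ∀ ω, P ω = ∑ p ∈ Finset.univ.filter
        (fun p : Fin N × Fin N => e1 p.2 - e0 p.1 = ω),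
        ‖(inner ℂ (φ₁ p.2) (𝒰 (φ₀ p.1)) : ℂ)‖ ^ 2 * Real.exp (-β * e0 p.1) / Z₀)
    (wl : ℝ) (hwl : wl ≤ -(6 * ‖Vu‖) / ε) :
    ∑ ω ∈ (Finset.image (fun p : Fin N × Fin N => e1 p.2 - e0 p.1)
        Finset.univ).filter (fun ω => ω < wl),
      P ω * Real.exp (-β * ω)
      ≤ (ε / 6) ^ 2 * (Z₁ / Z₀) := by
  set g : Fin N × Fin N → ℝ := fun p => ‖⟪φ₁ p.2, 𝒰 (φ₀ p.1)⟫_ℂ‖ ^ 2 * Real.exp (-β * e1 p.2)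
  have hcutoff : ‖Vu‖ ≤ -wl * ε / 6 := by
    rw [le_div_iff₀ hε] at hwl
    linarith
  have hZ₁nn : 0 ≤ Z₁ := by rw [hZ₁]; positivity
  have hmoment : ∑ p, (e1 p.2 - e0 p.1) ^ 2 * g p ≤ wl ^ 2 * ((ε / 6) ^ 2 * Z₁) :=
    calc _ ≤ ‖Vu‖ ^ 2 * Z₁ :=
          hZ₁ ▸ (hH₁ ▸ hH₀.add hV).sum_sq_sub_mul_norm_inner_sq_mul_le 𝒰 hVu φ₀.orthonormal
            (fun n => (φ₁.orthonormal.1 n).le) h0 h1 fun n => (Real.exp_pos (-β * e1 n)).le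
      _ ≤ (-wl * ε / 6) ^ 2 * Z₁ := by gcongr
      _ = _ := by ring
  have hwl0 : wl ≤ 0 := by nlinarith [norm_nonneg Vu]
  have hLHS : ∑ ω ∈ (Finset.image (fun p : Fin N × Fin N => e1 p.2 - e0 p.1)
        Finset.univ).filter (fun ω => ω < wl), P ω * Real.exp (-β * ω)
      = (∑ p ∈ Finset.univ.filter (fun p => e1 p.2 - e0 p.1 < wl), g p) / Z₀ := by
    simp_rw [hP, Finset.sum_filter_image_sum_fiber_mul, Finset.sum_div]
    refine Finset.sum_congr rfl fun p _ => ?_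
    rw [div_mul_eq_mul_div, mul_assoc, ← Real.exp_add]
    congr 3
    ring
  rw [hLHS, mul_div_assoc']
  gcongr
  · rw [hZ₀]; positivity
  exact Finset.sum_filter_lt_le_of_sum_sq_mul_le _ (fun p _ => by positivity) hwl0
    (by positivity) hmoment

/-- **Work cutoff for general Hamiltonians** (Theorem 2 of the paper).
Let `H₁ = H₀ + V` be Hermitian, `𝒰` unitary, `ε > 0`, `β ≥ 0`, and
`V_𝒰 = H₁ − 𝒰 H₀ 𝒰†`.  Then for any `wl ≤ −6‖V_𝒰‖/ε`, the forward work distribution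
satisfies `∑_{w < wl} P(w) e^{-βw} ≤ (ε/6)² Z₁/Z₀` (equivalently
`∑_{w < wl} P(w) e^{-β(w − ΔA)} ≤ (ε/6)²`). -/
theorem work_cutoff_general_hamiltonians {N : ℕ}
    (H₀ H₁ V : EuclideanSpace ℂ (Fin N) →L[ℂ] EuclideanSpace ℂ (Fin N))
    (hH₀ : IsSelfAdjoint H₀) (hV : IsSelfAdjoint V) (hH₁ : H₁ = H₀ + V)
    (φ₀ φ₁ : OrthonormalBasis (Fin N) ℂ (EuclideanSpace ℂ (Fin N)))
    (e0 e1 : Fin N → ℝ)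
    (h0 : ∀ m, H₀ (φ₀ m) = (e0 m : ℂ) • φ₀ m)
    (h1 : ∀ n, H₁ (φ₁ n) = (e1 n : ℂ) • φ₁ n)
    (𝒰 : EuclideanSpace ℂ (Fin N) ≃ₗᵢ[ℂ] EuclideanSpace ℂ (Fin N))
    (β : ℝ) (hβ : 0 ≤ β) (ε : ℝ) (hε : 0 < ε)
    (Z₀ Z₁ : ℝ)
    (hZ₀ : Z₀ = ∑ m, Real.exp (-β * e0 m))
    (hZ₁ : Z₁ = ∑ n, Real.exp (-β * e1 n))
    (Vu : EuclideanSpace ℂ (Fin N) →L[ℂ] EuclideanSpace ℂ (Fin N))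
    (hVu : ∀ ξ, Vu ξ = H₁ ξ - 𝒰 (H₀ (𝒰.symm ξ)))
    (P : ℝ → ℝ)
    (hP : ∀ ω, P ω = ∑ p ∈ Finset.univ.filter
        (fun p : Fin N × Fin N => e1 p.2 - e0 p.1 = ω),
        ‖(inner ℂ (φ₁ p.2) (𝒰 (φ₀ p.1)) : ℂ)‖ ^ 2 * Real.exp (-β * e0 p.1) / Z₀)
    (wl : ℝ) (hwl : wl ≤ -(6 * ‖Vu‖) / ε) :
    ∑ ω ∈ (Finset.image (fun p : Fin N × Fin N => e1 p.2 - e0 p.1)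
        Finset.univ).filter (fun ω => ω < wl),
      P ω * Real.exp (-β * ω)
      ≤ (ε / 6) ^ 2 * (Z₁ / Z₀) :=
  work_cutoff_general_hamiltonians_general H₀ H₁ V hH₀ hV hH₁ φ₀ φ₁ e0 e1 h0 h1 𝒰 β ε hε Z₀ Z₁ hZ₀
    hZ₁ Vu hVu P hP wl hwl
end

section
/- Work cutoff for commuting Hamiltonians: If H₀ and H₁ = H₀ + V commute and 𝒰 = 1, then every work value w with P(w) > 0 satisfies w ≥ −‖V‖; consequently ∑_{w < wₗ} P(w) e^{-β(w − ΔA)} = 0 for any wₗ ≤ −‖V‖. -/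
/-!
Projecting an eigenvector `φ₁ n` of `H₁` onto the eigenspace of `H₀` for `e0 m` gives a common
eigenvector of `H₀` and `H₁`: that eigenspace is invariant under `H₁` because the two commute,
so, `H₁` being self-adjoint, the orthogonal projection onto it commutes with `H₁`. The projection
is nonzero when `⟪φ₁ n, φ₀ m⟫ ≠ 0`, and `V = H₁ - H₀` acts on it as the scalar `e1 n - e0 m`,
whence `|e1 n - e0 m| ≤ ‖V‖`. So every work value carrying weight in `P` is at least `-‖V‖`.
-/

open Module End

namespace ContinuousLinearMap

variable {𝕜 E : Type*} [RCLike 𝕜] [NormedAddCommGroup E] [InnerProductSpace 𝕜 E]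

theorem norm_le_opNorm_of_apply_eq_smul {T : E →L[𝕜] E} {c : 𝕜} {x : E}
    (hx : T x = c • x) (hx0 : x ≠ 0) : ‖c‖ ≤ ‖T‖ := by
  refine le_of_mul_le_mul_right ?_ (norm_pos_iff.mpr hx0)
  simpa [hx, norm_smul] using T.le_opNorm x

variable [CompleteSpace E]

theorem commute_starProjection_of_mem_invtSubmodule {T : E →L[𝕜] E} (hT : IsSelfAdjoint T)
    {K : Submodule 𝕜 E} [K.HasOrthogonalProjection] (hK : K ∈ invtSubmodule (T : E →ₗ[𝕜] E)) :
    Commute K.starProjection T := by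
  refine (IsIdempotentElem.commute_iff K.isIdempotentElem_starProjection).mpr ⟨?_, ?_⟩
  · rwa [Submodule.range_starProjection]
  · rw [Submodule.ker_starProjection]
    exact orthogonal_mem_invtSubmodule (by rwa [hT.adjoint_eq])

theorem exists_common_eigenvector_of_inner_ne_zero {A B : E →L[𝕜] E} (hAB : Commute A B)
    (hB : IsSelfAdjoint B) {a b : 𝕜} {u v : E} (hu : A u = a • u) (hv : B v = b • v)
    (huv : inner 𝕜 v u ≠ 0) : ∃ x ≠ 0, A x = a • x ∧ B x = b • x := by
  set K := eigenspace (A : E →ₗ[𝕜] E) a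
  have hK : K ∈ invtSubmodule (B : E →ₗ[𝕜] E) :=
    mapsTo_genEigenspace_of_comm (hAB.map toLinearMapRingHom) a 1
  have huK : u ∈ K := mem_eigenspace_iff.mpr hu
  refine ⟨K.starProjection v, ?_, mem_eigenspace_iff.mp (K.starProjection_apply_mem v), ?_⟩
  · intro h
    apply huv
    rw [← Submodule.starProjection_eq_self_iff.mpr huK,
      ← Submodule.inner_starProjection_left_eq_right, h, inner_zero_left]
  · calc B (K.starProjection v) = K.starProjection (B v) :=
          congr($((commute_starProjection_of_mem_invtSubmodule hB hK).eq) v).symm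
      _ = b • K.starProjection v := by rw [hv, map_smul]

end ContinuousLinearMap

open ContinuousLinearMap in
theorem work_cutoff_commuting_hamiltonians_general {N : ℕ}
    (H₀ H₁ V : EuclideanSpace ℂ (Fin N) →L[ℂ] EuclideanSpace ℂ (Fin N))
    (hH₁self : IsSelfAdjoint H₁) (hH₁ : H₁ = H₀ + V)
    (hcomm : H₀ ∘L H₁ = H₁ ∘L H₀)
    (φ₀ φ₁ : OrthonormalBasis (Fin N) ℂ (EuclideanSpace ℂ (Fin N)))
    (e0 e1 : Fin N → ℝ)
    (h0 : ∀ m, H₀ (φ₀ m) = (e0 m : ℂ) • φ₀ m)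
    (h1 : ∀ n, H₁ (φ₁ n) = (e1 n : ℂ) • φ₁ n)
    (β : ℝ)
    (Z₀ Z₁ : ℝ)
    (P : ℝ → ℝ)
    (hP : ∀ ω, P ω = ∑ p ∈ Finset.univ.filter
        (fun p : Fin N × Fin N => e1 p.2 - e0 p.1 = ω),
        ‖(inner ℂ (φ₁ p.2) (φ₀ p.1) : ℂ)‖ ^ 2 * Real.exp (-β * e0 p.1) / Z₀) :
    (∀ m n, (inner ℂ (φ₁ n) (φ₀ m) : ℂ) ≠ 0 → -‖V‖ ≤ e1 n - e0 m) ∧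
    (∀ wl, wl ≤ -‖V‖ →
      ∑ ω ∈ (Finset.image (fun p : Fin N × Fin N => e1 p.2 - e0 p.1)
          Finset.univ).filter (fun ω => ω < wl),
        P ω * Real.exp (-β * (ω - (-(1 / β) * Real.log (Z₁ / Z₀)))) = 0) := by
  have cutoff : ∀ m n, (inner ℂ (φ₁ n) (φ₀ m) : ℂ) ≠ 0 → -‖V‖ ≤ e1 n - e0 m := by
    intro m n hmn
    obtain ⟨x, hx0, hx₀, hx₁⟩ :=
      exists_common_eigenvector_of_inner_ne_zero hcomm hH₁self (h0 m) (h1 n) hmn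
    have hVx : V x = ((e1 n - e0 m : ℝ) : ℂ) • x := by
      rw [show V = H₁ - H₀ by rw [hH₁]; abel, sub_apply, hx₁, hx₀, ← sub_smul, Complex.ofReal_sub]
    have hle := norm_le_opNorm_of_apply_eq_smul hVx hx0
    rw [Complex.norm_real, Real.norm_eq_abs] at hle
    linarith [neg_abs_le (e1 n - e0 m)]
  refine ⟨cutoff, fun wl hwl => Finset.sum_eq_zero fun ω hω => ?_⟩
  have hPω : P ω = 0 := by
    rw [hP]
    refine Finset.sum_eq_zero fun p hp => ?_
    have hinner : (inner ℂ (φ₁ p.2) (φ₀ p.1) : ℂ) = 0 := by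
      by_contra h
      have := cutoff p.1 p.2 h
      simp only [Finset.mem_filter] at hp hω
      linarith [hp.2, hω.2]
    simp [hinner]
  rw [hPω, zero_mul]

/-- **Work cutoff for commuting Hamiltonians** (Theorem 3 of the paper).
If `H₀` and `H₁ = H₀ + V` commute and `𝒰 = 1`, every work value with nonzero
probability satisfies `w ≥ −‖V‖` (i.e. overlapping eigenvectors have
`e1ₙ − e0ₘ ≥ −‖V‖`); consequently `∑_{w < wl} P(w) e^{-β(w − ΔA)} = 0` for every
`wl ≤ −‖V‖`. -/
theorem work_cutoff_commuting_hamiltonians {N : ℕ}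
    (H₀ H₁ V : EuclideanSpace ℂ (Fin N) →L[ℂ] EuclideanSpace ℂ (Fin N))
    (hH₀ : IsSelfAdjoint H₀) (hH₁self : IsSelfAdjoint H₁) (hH₁ : H₁ = H₀ + V)
    (hcomm : H₀ ∘L H₁ = H₁ ∘L H₀)
    (φ₀ φ₁ : OrthonormalBasis (Fin N) ℂ (EuclideanSpace ℂ (Fin N)))
    (e0 e1 : Fin N → ℝ)
    (h0 : ∀ m, H₀ (φ₀ m) = (e0 m : ℂ) • φ₀ m)
    (h1 : ∀ n, H₁ (φ₁ n) = (e1 n : ℂ) • φ₁ n)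
    (β : ℝ) (hβ : 0 ≤ β)
    (Z₀ Z₁ : ℝ)
    (hZ₀ : Z₀ = ∑ m, Real.exp (-β * e0 m))
    (hZ₁ : Z₁ = ∑ n, Real.exp (-β * e1 n))
    (P : ℝ → ℝ)
    (hP : ∀ ω, P ω = ∑ p ∈ Finset.univ.filter
        (fun p : Fin N × Fin N => e1 p.2 - e0 p.1 = ω),
        ‖(inner ℂ (φ₁ p.2) (φ₀ p.1) : ℂ)‖ ^ 2 * Real.exp (-β * e0 p.1) / Z₀) :
    (∀ m n, (inner ℂ (φ₁ n) (φ₀ m) : ℂ) ≠ 0 → -‖V‖ ≤ e1 n - e0 m) ∧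
    (∀ wl, wl ≤ -‖V‖ →
      ∑ ω ∈ (Finset.image (fun p : Fin N × Fin N => e1 p.2 - e0 p.1)
          Finset.univ).filter (fun ω => ω < wl),
        P ω * Real.exp (-β * (ω - (-(1 / β) * Real.log (Z₁ / Z₀)))) = 0) :=
  work_cutoff_commuting_hamiltonians_general H₀ H₁ V hH₁self hH₁ hcomm φ₀ φ₁ e0 e1 h0 h1 β Z₀ Z₁ P
    hP
end

section
/- Norm of interpolated exponential product: For Hermitian H₀ and V on ℂ^N and a ≥ 0, ‖e^{-a(H₀+V)} e^{aH₀}‖ ≤ exp(∫₀^a ‖e^{-a'H₀} V e^{a'H₀}‖ da') ≤ exp(a · max_{a'∈[0,a]} ‖e^{-a'H₀} V e^{a'H₀}‖). -/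
/-!
With `A = H₀ + V`, the interpolation `F t = e^{-tA} e^{tH₀}` satisfies `F 0 = 1` and
`F' t = -F t · V(t)`, where `V(t) = e^{-tH₀} V e^{tH₀}`, so `‖F' t‖ ≤ ‖V(t)‖ ‖F t‖`.
Grönwall's inequality with the continuous rate `t ↦ ‖V(t)‖` bounds `‖F a‖` by the exponential
of its integral, and the integral over `[0, a]` is at most `a` times the supremum of the rate.
-/

open Set Filter Topology NormedSpace

/-- The margin `ε` makes the barrier `B` grow strictly faster than `‖f‖` can where they meet. -/
theorem norm_le_mul_exp_integral_add_of_norm_deriv_right_le {E : Type*} [NormedAddCommGroup E]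
    [NormedSpace ℝ E] {f f' : ℝ → E} {g : ℝ → ℝ} {a b ε : ℝ} (hε : 0 < ε) (hg : Continuous g)
    (hf : ContinuousOn f (Icc a b)) (hf' : ∀ x ∈ Ico a b, HasDerivWithinAt f (f' x) (Ici x) x)
    (bound : ∀ x ∈ Ico a b, ‖f' x‖ ≤ g x * ‖f x‖) :
    ∀ x ∈ Icc a b, ‖f x‖ ≤ (‖f a‖ + ε) * Real.exp ((∫ t in a..x, g t) + ε * (x - a)) := by
  set B : ℝ → ℝ := fun x => (‖f a‖ + ε) * Real.exp ((∫ t in a..x, g t) + ε * (x - a))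
  have hB_pos : ∀ x, 0 < B x := fun x => by positivity
  have hB' : ∀ x, HasDerivAt B ((g x + ε) * B x) x := fun x => by
    have hI : HasDerivAt (fun x => ∫ t in a..x, g t) (g x) x :=
      intervalIntegral.integral_hasDerivAt_right (hg.intervalIntegrable _ _)
        (hg.stronglyMeasurableAtFilter _ _) hg.continuousAt
    refine (((hI.add (((hasDerivAt_id x).sub_const a).const_mul ε)).exp).const_mul
      (‖f a‖ + ε)).congr_deriv ?_
    simp only [B, Pi.add_apply, id]
    ring
  refine image_norm_le_of_norm_deriv_right_lt_deriv_boundary' hf hf' (by simp [hε.le])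
    (fun x _ => (hB' x).continuousAt.continuousWithinAt) (fun x _ => (hB' x).hasDerivWithinAt) ?_
  intro x hx hfx
  calc ‖f' x‖ ≤ g x * ‖f x‖ := bound x hx
    _ = g x * B x := by rw [hfx]
    _ < (g x + ε) * B x := by nlinarith [hB_pos x]

theorem norm_le_mul_exp_integral_of_norm_deriv_right_le {E : Type*} [NormedAddCommGroup E]
    [NormedSpace ℝ E] {f f' : ℝ → E} {g : ℝ → ℝ} {a b : ℝ} (hg : Continuous g)
    (hf : ContinuousOn f (Icc a b)) (hf' : ∀ x ∈ Ico a b, HasDerivWithinAt f (f' x) (Ici x) x)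
    (bound : ∀ x ∈ Ico a b, ‖f' x‖ ≤ g x * ‖f x‖) :
    ∀ x ∈ Icc a b, ‖f x‖ ≤ ‖f a‖ * Real.exp (∫ t in a..x, g t) := by
  intro x hx
  set φ : ℝ → ℝ := fun ε => (‖f a‖ + ε) * Real.exp ((∫ t in a..x, g t) + ε * (x - a))
  have hφ : Tendsto φ (𝓝[>] 0) (𝓝 (‖f a‖ * Real.exp (∫ t in a..x, g t))) := by
    simpa [φ] using ((by fun_prop : Continuous φ).tendsto 0).mono_left nhdsWithin_le_nhds
  refine ge_of_tendsto hφ ?_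
  filter_upwards [self_mem_nhdsWithin] with ε hε
  exact norm_le_mul_exp_integral_add_of_norm_deriv_right_le hε hg hf hf' bound x hx

theorem intervalIntegral.integral_le_sub_mul_ciSup_Icc {g : ℝ → ℝ} {a b : ℝ} (hab : a ≤ b)
    (hg : ContinuousOn g (Icc a b)) :
    ∫ t in a..b, g t ≤ (b - a) * ⨆ t : Icc a b, g t := by
  have hbdd : BddAbove (range fun t : Icc a b => g t) := by
    rw [← image_eq_range]
    exact (isCompact_Icc.image_of_continuousOn hg).bddAbove
  calc ∫ t in a..b, g t ≤ ∫ _ in a..b, ⨆ t : Icc a b, g t :=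
        integral_mono_on hab (hg.intervalIntegrable_of_Icc hab) intervalIntegrable_const
          fun t ht => le_ciSup hbdd ⟨t, ht⟩
    _ = (b - a) * ⨆ t : Icc a b, g t := by simp

section BanachAlgebra

variable {𝔸 : Type*} [NormedRing 𝔸] [NormedAlgebra ℝ 𝔸] [CompleteSpace 𝔸]

theorem exp_smul_mul_exp_neg_smul (t : ℝ) (x : 𝔸) : exp (t • x) * exp (-t • x) = 1 := by
  let : NormedAlgebra ℚ 𝔸 := .restrictScalars ℚ ℝ 𝔸
  rw [neg_smul, ← exp_add_of_commute (Commute.refl _).neg_right, add_neg_cancel, exp_zero]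

theorem hasDerivAt_exp_neg_smul_add_mul_exp_smul (H V : 𝔸) (t : ℝ) :
    HasDerivAt (fun s : ℝ => exp (-s • (H + V)) * exp (s • H))
      (-(exp (-t • (H + V)) * exp (t • H) * (exp (-t • H) * V * exp (t • H)))) t := by
  have hA : HasDerivAt (fun s : ℝ => exp (-s • (H + V))) (-(exp (-t • (H + V)) * (H + V))) t := by
    simpa only [Function.comp_def, neg_one_smul] using
      (hasDerivAt_exp_smul_const (H + V) (-t)).scomp t (hasDerivAt_neg t)
  refine (hA.mul (hasDerivAt_exp_smul_const' H t)).congr_deriv ?_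
  simp only [mul_assoc]
  rw [← mul_assoc (exp (t • H)), exp_smul_mul_exp_neg_smul, one_mul]
  noncomm_ring

theorem continuous_exp_neg_smul_mul_mul_exp_smul (H V : 𝔸) :
    Continuous fun t : ℝ => exp (-t • H) * V * exp (t • H) :=
  have hexp : Continuous fun t : ℝ => exp (t • H) := (differentiable_exp_smul_const ℝ H).continuous
  ((hexp.comp continuous_neg).mul continuous_const).mul hexp

theorem norm_exp_neg_smul_add_mul_exp_smul_le (H V : 𝔸) {a : ℝ} (ha : 0 ≤ a) :
    ‖exp (-a • (H + V)) * exp (a • H)‖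
      ≤ ‖(1 : 𝔸)‖ * Real.exp (∫ t in 0..a, ‖exp (-t • H) * V * exp (t • H)‖) := by
  have hF := hasDerivAt_exp_neg_smul_add_mul_exp_smul H V
  simpa using norm_le_mul_exp_integral_of_norm_deriv_right_le
    (continuous_exp_neg_smul_mul_mul_exp_smul H V).norm
    (fun t _ => (hF t).continuousAt.continuousWithinAt) (fun t _ => (hF t).hasDerivWithinAt)
    (fun t _ => (norm_neg _).trans_le (norm_mul_le _ _) |>.trans_eq (mul_comm _ _)) a ⟨ha, le_rfl⟩

end BanachAlgebra

theorem norm_interpolated_exponential_product_general {N : ℕ}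
    (H₀ V : EuclideanSpace ℂ (Fin N) →L[ℂ] EuclideanSpace ℂ (Fin N))
    (a : ℝ) (ha : 0 ≤ a) :
    ‖NormedSpace.exp (((-a : ℝ) : ℂ) • (H₀ + V)) *
        NormedSpace.exp ((a : ℂ) • H₀)‖
      ≤ Real.exp (∫ t in (0:ℝ)..a,
          ‖NormedSpace.exp (((-t : ℝ) : ℂ) • H₀) ∘L V ∘L
              NormedSpace.exp (((t : ℝ) : ℂ) • H₀)‖) ∧
    Real.exp (∫ t in (0:ℝ)..a,
        ‖NormedSpace.exp (((-t : ℝ) : ℂ) • H₀) ∘L V ∘L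
            NormedSpace.exp (((t : ℝ) : ℂ) • H₀)‖)
      ≤ Real.exp (a * ⨆ t : Set.Icc (0:ℝ) a,
          ‖NormedSpace.exp (((-(t : ℝ)) : ℂ) • H₀) ∘L V ∘L
              NormedSpace.exp ((((t : ℝ)) : ℂ) • H₀)‖) := by
  -- `ℝ` acts on `ℂ`-linear maps by restriction of scalars
  have hsmul (t : ℝ) (X : EuclideanSpace ℂ (Fin N) →L[ℂ] EuclideanSpace ℂ (Fin N)) :
      (t : ℂ) • X = t • X := rfl
  simp only [← Complex.ofReal_neg, hsmul, ← ContinuousLinearMap.mul_def, ← mul_assoc]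
  refine ⟨(norm_exp_neg_smul_add_mul_exp_smul_le H₀ V ha).trans
    (mul_le_of_le_one_left (by positivity) ContinuousLinearMap.norm_id_le), ?_⟩
  rw [Real.exp_le_exp]
  simpa only [sub_zero] using intervalIntegral.integral_le_sub_mul_ciSup_Icc ha
    (continuous_exp_neg_smul_mul_mul_exp_smul H₀ V).norm.continuousOn

/-- **Norm of the interpolated exponential product:** for Hermitian `H₀, V` and `a ≥ 0`,
`‖e^{-a(H₀+V)} e^{aH₀}‖ ≤ exp(∫₀^a ‖e^{-tH₀} V e^{tH₀}‖ dt)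
  ≤ exp(a · sup_{t∈[0,a]} ‖e^{-tH₀} V e^{tH₀}‖)`. -/
theorem norm_interpolated_exponential_product {N : ℕ}
    (H₀ V : EuclideanSpace ℂ (Fin N) →L[ℂ] EuclideanSpace ℂ (Fin N))
    (hH₀ : IsSelfAdjoint H₀) (hV : IsSelfAdjoint V)
    (a : ℝ) (ha : 0 ≤ a) :
    ‖NormedSpace.exp (((-a : ℝ) : ℂ) • (H₀ + V)) *
        NormedSpace.exp ((a : ℂ) • H₀)‖
      ≤ Real.exp (∫ t in (0:ℝ)..a,
          ‖NormedSpace.exp (((-t : ℝ) : ℂ) • H₀) ∘L V ∘L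
              NormedSpace.exp (((t : ℝ) : ℂ) • H₀)‖) ∧
    Real.exp (∫ t in (0:ℝ)..a,
        ‖NormedSpace.exp (((-t : ℝ) : ℂ) • H₀) ∘L V ∘L
            NormedSpace.exp (((t : ℝ) : ℂ) • H₀)‖)
      ≤ Real.exp (a * ⨆ t : Set.Icc (0:ℝ) a,
          ‖NormedSpace.exp (((-(t : ℝ)) : ℂ) • H₀) ∘L V ∘L
              NormedSpace.exp ((((t : ℝ)) : ℂ) • H₀)‖) :=
  norm_interpolated_exponential_product_general H₀ V a ha
end

section
/- LCU block-encoding identity: Let U be unitary on a Hilbert space H, αⱼ ∈ ℂ for −J ≤ j ≤ J with α = ∑ⱼ |αⱼ| > 0, and suppose 2J+2 = 2^m. Let B be a unitary on ℂ^{2^m} with B|0⟩ = α^{-1/2} ∑_{j=0}^{2J} (α_{−J+j})^{1/2} |j⟩, R = ∑_{j=0}^{2J+1} |j⟩⟨j| ⊗ U^j, and S = (1 ⊗ U^{−J})(Bᵀ ⊗ 1) R (B ⊗ 1). Then for every |Ψ⟩ ∈ H: (⟨0| ⊗ 1) S (|0⟩ ⊗ |Ψ⟩) = (1/α) ∑_{j=−J}^{J}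 αⱼ U^j |Ψ⟩. -/
/-!
`B ⊗ 1` sends `|0⟩ ⊗ Ψ` to `∑ₗ B l 0 |l⟩ ⊗ Ψ`, the select operation turns branch `l` into
`U^l Ψ`, and the `0`-th row of `Bᵀ` is again the column `B · 0`.  So the `|0⟩`-component is
`∑ₗ (B l 0)² U^l Ψ`, and `(B l 0)² = a_{l-J} / α` because the amplitudes are square roots of the
coefficients: squaring (not `|·|²`) is why `Bᵀ` rather than `Bᴴ` appears.
-/

open Finset

theorem Finset.sum_Icc_neg_natCast_eq_sum_range {M : Type*} [AddCommMonoid M] (J : ℕ)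
    (f : ℤ → M) : ∑ j ∈ Icc (-(J : ℤ)) J, f j = ∑ l ∈ range (2 * J + 1), f (l - J) := by
  refine (sum_nbij' (fun l : ℕ ↦ (l : ℤ) - J) (fun j : ℤ ↦ (j + J).toNat) ?_ ?_ ?_ ?_ ?_).symm <;>
    intros <;> simp_all <;> omega

theorem Fin.sum_ite_val_le {M : Type*} [AddCommMonoid M] (n : ℕ) (g : ℕ → M) :
    ∑ l : Fin (n + 1 + 1), (if (l : ℕ) ≤ n then g l else 0) = ∑ l ∈ range (n + 1), g l := by
  rw [Fin.sum_univ_eq_sum_range (fun l ↦ if l ≤ n then g l else 0), sum_range_succ,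
    if_neg (by omega), add_zero]
  exact sum_congr rfl fun l hl ↦ if_pos (by simpa [Nat.lt_succ_iff] using hl)

theorem Matrix.sum_smul_pi_single {ι R M : Type*} [Fintype ι] [DecidableEq ι] [Semiring R]
    [AddCommMonoid M] [Module R M] (B : Matrix ι ι R) (i k : ι) (x : M) :
    ∑ l, B i l • Pi.single k x l = B i k • x := by
  rw [sum_eq_single k (fun l _ hl ↦ by rw [Pi.single_eq_of_ne hl, smul_zero]) (by simp),
    Pi.single_eq_same]

theorem LinearIsometryEquiv.zpow_apply_zpow_apply {R E : Type*} [Semiring R]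
    [SeminormedAddCommGroup E] [Module R E] (U : E ≃ₗᵢ[R] E) (i j : ℤ) (x : E) :
    (U ^ i) ((U ^ j) x) = (U ^ (i + j)) x := by
  rw [zpow_add]
  rfl

theorem Complex.div_ofReal_sqrt_sq (z : ℂ) {r : ℝ} (hr : 0 ≤ r) :
    (z / (Real.sqrt r : ℂ)) ^ 2 = (r : ℂ)⁻¹ * z ^ 2 := by
  rw [div_pow, ← Complex.ofReal_pow, Real.sq_sqrt hr, div_eq_inv_mul]

-- `Fin (2J+2) → H` models `ℂ^{2J+2} ⊗ H`; `appB`, `appBT`, `appR`, `appUJ` are `B ⊗ 1`,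
-- `Bᵀ ⊗ 1`, the select operation `R` and `1 ⊗ U^{-J}`.
theorem lcu_block_encoding_identity_general {H : Type*}
    [NormedAddCommGroup H] [InnerProductSpace ℂ H]
    (U : H ≃ₗᵢ[ℂ] H) (J : ℕ)
    (a : ℤ → ℂ) (αtot : ℝ)
    (hαpos : 0 < αtot)
    (sq : Fin (2 * J + 1 + 1) → ℂ)
    (hsq : ∀ j : Fin (2 * J + 1 + 1),
      (sq j) ^ 2 = if (j : ℕ) ≤ 2 * J then a ((j : ℕ) - (J : ℤ)) else 0)
    (B : Matrix (Fin (2 * J + 1 + 1)) (Fin (2 * J + 1 + 1)) ℂ)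
    (hB0 : ∀ j : Fin (2 * J + 1 + 1), B j 0 = sq j / ((Real.sqrt αtot : ℝ) : ℂ))
    (appB appBT appR appUJ : (Fin (2 * J + 1 + 1) → H) → (Fin (2 * J + 1 + 1) → H))
    (happB : ∀ f i, appB f i = ∑ l, B i l • f l)
    (happBT : ∀ f i, appBT f i = ∑ l, B l i • f l)
    (happR : ∀ f i, appR f i = (U ^ ((i : ℕ) : ℤ)) (f i))
    (happUJ : ∀ f i, appUJ f i = (U ^ (-(J : ℤ))) (f i))
    (Ψ : H) :
    appUJ (appBT (appR (appB (Pi.single 0 Ψ)))) 0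
      = ((αtot : ℝ) : ℂ)⁻¹ • ∑ j ∈ Finset.Icc (-(J : ℤ)) (J : ℤ), a j • (U ^ j) Ψ := by
  have hcol : ∀ l, B l 0 ^ 2
      = (αtot : ℂ)⁻¹ * if (l : ℕ) ≤ 2 * J then a ((l : ℕ) - (J : ℤ)) else 0 := fun l ↦ by
    rw [hB0, Complex.div_ofReal_sqrt_sq _ hαpos.le, hsq]
  calc appUJ (appBT (appR (appB (Pi.single 0 Ψ)))) 0
      = ∑ l : Fin (2 * J + 1 + 1), B l 0 ^ 2 • (U ^ ((l : ℕ) - (J : ℤ))) Ψ := by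
        simp only [happUJ, happBT, happR, happB, Matrix.sum_smul_pi_single, map_sum, map_smul,
          smul_smul, ← pow_two, LinearIsometryEquiv.zpow_apply_zpow_apply, neg_add_eq_sub]
    _ = (αtot : ℂ)⁻¹ • ∑ l : Fin (2 * J + 1 + 1),
          if (l : ℕ) ≤ 2 * J then a ((l : ℕ) - (J : ℤ)) • (U ^ ((l : ℕ) - (J : ℤ))) Ψ else 0 := by
        simp only [hcol, mul_smul, ite_smul, zero_smul, smul_sum]
    _ = _ := by
        rw [Fin.sum_ite_val_le (g := fun l ↦ a (l - J) • (U ^ ((l : ℤ) - J)) Ψ),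
          sum_Icc_neg_natCast_eq_sum_range]

/-- **LCU block-encoding identity.**  Let `U` be a unitary on a Hilbert space `H`,
`a : ℤ → ℂ` coefficients with `α = ∑_{|j|≤J} |a j| > 0`, and `2J+2 = 2^m`.  Let `B` be
a unitary matrix whose first column is `(√(a_{−J+j}))_j / √α` (with arbitrary fixed
square roots `sq`, vanishing on the index `2J+1`), let `appB`, `appBT` implement
`B ⊗ 1` and `Bᵀ ⊗ 1` on the direct sum `ℂ^{2J+2} ⊗ H ≅ (Fin (2J+2) → H)`, let `appR`
implement the select operation `∑ⱼ |j⟩⟨j| ⊗ Uʲ`, and `appUJ` implement `1 ⊗ U^{−J}`.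
Then for every `Ψ`, the `|0⟩`-component of
`(1 ⊗ U^{−J}) (Bᵀ ⊗ 1) R (B ⊗ 1) (|0⟩ ⊗ Ψ)` equals `(1/α) ∑_{j=−J}^{J} a j • Uʲ Ψ`. -/
theorem lcu_block_encoding_identity {H : Type*}
    [NormedAddCommGroup H] [InnerProductSpace ℂ H] [CompleteSpace H]
    (U : H ≃ₗᵢ[ℂ] H) (m J : ℕ) (hmJ : 2 * J + 1 + 1 = 2 ^ m)
    (a : ℤ → ℂ) (αtot : ℝ)
    (hαtot : αtot = ∑ j ∈ Finset.Icc (-(J : ℤ)) (J : ℤ), ‖a j‖) (hαpos : 0 < αtot)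
    (sq : Fin (2 * J + 1 + 1) → ℂ)
    (hsq : ∀ j : Fin (2 * J + 1 + 1),
      (sq j) ^ 2 = if (j : ℕ) ≤ 2 * J then a ((j : ℕ) - (J : ℤ)) else 0)
    (B : Matrix (Fin (2 * J + 1 + 1)) (Fin (2 * J + 1 + 1)) ℂ)
    (hB : B ∈ Matrix.unitaryGroup (Fin (2 * J + 1 + 1)) ℂ)
    (hB0 : ∀ j : Fin (2 * J + 1 + 1), B j 0 = sq j / ((Real.sqrt αtot : ℝ) : ℂ))
    (appB appBT appR appUJ : (Fin (2 * J + 1 + 1) → H) → (Fin (2 * J + 1 + 1) → H))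
    (happB : ∀ f i, appB f i = ∑ l, B i l • f l)
    (happBT : ∀ f i, appBT f i = ∑ l, B l i • f l)
    (happR : ∀ f i, appR f i = (U ^ ((i : ℕ) : ℤ)) (f i))
    (happUJ : ∀ f i, appUJ f i = (U ^ (-(J : ℤ))) (f i))
    (Ψ : H) :
    appUJ (appBT (appR (appB (Pi.single 0 Ψ)))) 0
      = ((αtot : ℝ) : ℂ)⁻¹ • ∑ j ∈ Finset.Icc (-(J : ℤ)) (J : ℤ), a j • (U ^ j) Ψ :=
  lcu_block_encoding_identity_general U J a αtot hαpos sq hsq B hB0 appB appBT appR appUJ happB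
    happBT happR happUJ Ψ
end
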